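/- Let ρ : {1,2,3,…} → ℝ and let F(z) = ∑_{n≥1} ( ∑_{T plane tree, |T|=n} ∏_{v∈T} ρ(h_v) ) z^n be the formal power series over ℝ whose n-th coefficient is the total hook weight of all plane trees of size n. Since F has zero constant term, 1 − F is invertible in the ring of formal power series, and for every n ≥ 1, [z^n]F(z) = ρ(n)·[z^{n-1}](1 − F(z))^{-1}. -/

import Mathlib

/-!
Deleting the root of a tree of size `n + 1` leaves the ordered forest of its root subtrees, of
total size `n`, and the root has hook length `n + 1`; hence `[zⁿ⁺¹]F = ρ(n+1) · [zⁿ]B`, where `B`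
is the generating function of forests weighted by the product of the hook weights of their trees.
Splitting a nonempty forest into its first tree and the rest gives `B = 1 + F · B`, that is
`B = (1 - F)⁻¹`.
-/

/-- A plane tree (ordered rooted tree): a root together with a finite
sequence of plane trees (its root subtrees). -/
inductive PlaneTree : Type where
  | node : List PlaneTree → PlaneTree

namespace PlaneTree

/-- The size of a plane tree: its number of vertices. -/
def size : PlaneTree → ℕ
  | node ts => 1 + (ts.attach.map fun t => size t.1).sum
decreasing_by simp only [PlaneTree.node.sizeOf_spec]; have := List.sizeOf_lt_of_mem t.2; omega

/-- The degree weight `w_deg(T) = ∏_{v ∈ T} φ_{d(v)}`, where `d(v)` is the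
out-degree of the vertex `v`. -/
noncomputable def degWeight (φ : ℕ → ℝ) : PlaneTree → ℝ
  | node ts => φ ts.length * (ts.attach.map fun t => degWeight φ t.1).prod
decreasing_by simp only [PlaneTree.node.sizeOf_spec]; have := List.sizeOf_lt_of_mem t.2; omega

/-- The hook weight `w_h(T) = ∏_{v ∈ T} ρ(h_v)`, where the hook length `h_v`
is the number of vertices of the subtree of `T` rooted at `v`. -/
noncomputable def hookWeight (ρ : ℕ → ℝ) : PlaneTree → ℝ
  | node ts => ρ (size (node ts)) * (ts.attach.map fun t => hookWeight ρ t.1).prod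
decreasing_by simp only [PlaneTree.node.sizeOf_spec]; have := List.sizeOf_lt_of_mem t.2; omega

end PlaneTree

open Finset PowerSeries

namespace PlaneTree

theorem size_node (ts : List PlaneTree) : (node ts).size = 1 + (ts.map size).sum := by
  rw [size, List.map_attach_eq_pmap, List.pmap_eq_map]

theorem hookWeight_node (ρ : ℕ → ℝ) (ts : List PlaneTree) :
    (node ts).hookWeight ρ = ρ (node ts).size * (ts.map (hookWeight ρ)).prod := by
  rw [hookWeight, List.map_attach_eq_pmap, List.pmap_eq_map]

theorem one_le_size (T : PlaneTree) : 1 ≤ T.size := by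
  cases T
  rw [size_node]
  omega

theorem node_injective : Function.Injective node := fun _ _ h => node.inj h

noncomputable instance : DecidableEq PlaneTree := Classical.decEq _

noncomputable def forestsOfSize : ℕ → Finset (List PlaneTree)
  | 0 => {[]}
  | m + 1 => (antidiagonal m).attach.biUnion fun p =>
      ((forestsOfSize p.1.1).image node ×ˢ forestsOfSize p.1.2).image fun q => q.1 :: q.2
decreasing_by all_goals have := mem_antidiagonal.mp p.2; omega

noncomputable def ofSize : ℕ → Finset PlaneTree
  | 0 => ∅
  | n + 1 => (forestsOfSize n).image node

theorem forestsOfSize_succ (m : ℕ) :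
    forestsOfSize (m + 1) = (antidiagonal m).biUnion fun p =>
      (ofSize (p.1 + 1) ×ˢ forestsOfSize p.2).image fun q => q.1 :: q.2 := by
  simp only [forestsOfSize.eq_2, ofSize]
  exact attach_biUnion (f := fun p : ℕ × ℕ =>
    ((forestsOfSize p.1).image node ×ˢ forestsOfSize p.2).image fun q => q.1 :: q.2)

theorem node_mem_ofSize_succ {n : ℕ} {ts : List PlaneTree} :
    node ts ∈ ofSize (n + 1) ↔ ts ∈ forestsOfSize n :=
  node_injective.mem_finset_image

theorem mem_forestsOfSize {m : ℕ} {ts : List PlaneTree} :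
    ts ∈ forestsOfSize m ↔ (ts.map size).sum = m := by
  induction m using Nat.strong_induction_on generalizing ts with
  | _ m ih =>
  cases m with
  | zero =>
    cases ts with
    | nil => simp [forestsOfSize]
    | cons t ts => simp [forestsOfSize, Nat.one_le_iff_ne_zero.mp (one_le_size t)]
  | succ m =>
    have mem_ofSize : ∀ k < m + 1, ∀ T, T ∈ ofSize (k + 1) ↔ T.size = k + 1 := by
      rintro k hk ⟨ts⟩
      rw [node_mem_ofSize_succ, ih k hk, size_node]
      omega
    rw [forestsOfSize_succ]
    simp only [mem_biUnion, mem_image, mem_product, HasAntidiagonal.mem_antidiagonal, Prod.exists]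
    constructor
    · rintro ⟨a, b, rfl, t, ts, ⟨ht, hts⟩, rfl⟩
      rw [mem_ofSize a (by omega)] at ht
      rw [ih b (by omega)] at hts
      simp only [List.map_cons, List.sum_cons, ht, hts]
      omega
    · cases ts with
      | nil => simp
      | cons t ts =>
        intro h
        simp only [List.map_cons, List.sum_cons] at h
        have := one_le_size t
        refine ⟨t.size - 1, (ts.map size).sum, by omega, t, ts, ⟨?_, ?_⟩, rfl⟩
        · rw [mem_ofSize _ (by omega)]
          omega
        · exact (ih (ts.map size).sum (by omega)).mpr rfl

theorem mem_ofSize {n : ℕ} {T : PlaneTree} : T ∈ ofSize n ↔ T.size = n := by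
  obtain ⟨ts⟩ := T
  cases n with
  | zero => simp [ofSize, size_node]
  | succ n =>
    rw [node_mem_ofSize_succ, mem_forestsOfSize, size_node]
    omega

theorem pairwiseDisjoint_forestsOfSize_succ (m : ℕ) :
    (antidiagonal m : Set (ℕ × ℕ)).PairwiseDisjoint fun p =>
      (ofSize (p.1 + 1) ×ˢ forestsOfSize p.2).image fun q => q.1 :: q.2 := by
  rintro ⟨a, b⟩ hab ⟨c, d⟩ hcd hne
  simp only [Function.onFun, disjoint_left, mem_image, mem_product, Prod.exists, not_exists,
    not_and]
  rintro _ ⟨t, ts, ⟨ht, -⟩, rfl⟩ t' ts' ⟨ht', -⟩ h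
  rw [List.cons_eq_cons] at h
  rw [h.1, mem_ofSize] at ht'
  rw [mem_ofSize] at ht
  simp only [mem_coe, HasAntidiagonal.mem_antidiagonal] at hab hcd
  exact hne (Prod.ext (by omega) (by omega))

theorem tsum_subtype_size_eq {α : Type*} [AddCommMonoid α] [TopologicalSpace α]
    (f : PlaneTree → α) (n : ℕ) :
    ∑' T : {T : PlaneTree // T.size = n}, f T = ∑ T ∈ ofSize n, f T := by
  rw [← Finset.tsum_subtype]
  exact (Equiv.subtypeEquivRight fun _ => mem_ofSize.symm).tsum_eq fun T : ofSize n => f T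

section Series

variable {R : Type*} [CommSemiring R] (f : PlaneTree → R)

theorem sum_forestsOfSize_succ (m : ℕ) :
    ∑ ts ∈ forestsOfSize (m + 1), (ts.map f).prod =
      ∑ p ∈ antidiagonal m,
        (∑ T ∈ ofSize (p.1 + 1), f T) * ∑ ts ∈ forestsOfSize p.2, (ts.map f).prod := by
  rw [forestsOfSize_succ, sum_biUnion (pairwiseDisjoint_forestsOfSize_succ m)]
  refine sum_congr rfl fun p _ => ?_
  rw [sum_image fun _ _ _ _ h => Prod.ext (List.cons_eq_cons.mp h).1 (List.cons_eq_cons.mp h).2,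
    sum_mul_sum, sum_product]
  simp only [List.map_cons, List.prod_cons]

noncomputable def treeSeries : R⟦X⟧ := mk fun n => ∑ T ∈ ofSize n, f T

noncomputable def forestSeries : R⟦X⟧ := mk fun m => ∑ ts ∈ forestsOfSize m, (ts.map f).prod

theorem forestSeries_eq_one_add_mul : forestSeries f = 1 + treeSeries f * forestSeries f := by
  ext m
  cases m with
  | zero => simp [forestSeries, treeSeries, forestsOfSize, ofSize]
  | succ m =>
    rw [map_add, coeff_one, if_neg m.succ_ne_zero, zero_add, coeff_mul,
      Nat.sum_antidiagonal_succ]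
    simp only [forestSeries, treeSeries, coeff_mk, ofSize, sum_empty, zero_mul, zero_add]
    exact sum_forestsOfSize_succ f m

end Series

theorem sum_hookWeight_ofSize_succ (ρ : ℕ → ℝ) (n : ℕ) :
    ∑ T ∈ ofSize (n + 1), T.hookWeight ρ =
      ρ (n + 1) * ∑ ts ∈ forestsOfSize n, (ts.map (hookWeight ρ)).prod := by
  rw [ofSize, sum_image fun _ _ _ _ h => node_injective h, mul_sum]
  refine sum_congr rfl fun ts hts => ?_
  rw [hookWeight_node, size_node, mem_forestsOfSize.mp hts, add_comm]

end PlaneTree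

theorem PowerSeries.inv_one_sub_eq_of_eq_one_add_mul {k : Type*} [Field k] {A B : k⟦X⟧}
    (h : B = 1 + A * B) : (1 - A)⁻¹ = B := by
  have hmul : B * (1 - A) = 1 := by linear_combination h
  refine (inv_eq_iff_mul_eq_one ?_).mpr hmul
  exact right_ne_zero_of_mul_eq_one (by rw [← map_mul, hmul, map_one])

/-- **Hook length formula for plane trees** (the case `φ(t) = 1/(1−t)`).
If `F(z) = ∑_{n≥1} (∑_{|T|=n} ∏_{v∈T} ρ(h_v)) zⁿ`, then for all `n ≥ 1`,
`[zⁿ]F(z) = ρ(n) · [z^{n-1}] (1 − F(z))⁻¹` (where `1 − F` has constant term `1`,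
hence is invertible as a formal power series). -/
theorem hook_length_plane_trees
    (ρ : ℕ → ℝ) (F : PowerSeries ℝ)
    (hF : F = PowerSeries.mk fun n =>
      ∑' T : {T : PlaneTree // T.size = n}, T.1.hookWeight ρ)
    (n : ℕ) (hn : 1 ≤ n) :
    (PowerSeries.coeff n) F = ρ n * (PowerSeries.coeff (n - 1)) (1 - F)⁻¹ := by
  obtain ⟨m, rfl⟩ : ∃ m, n = m + 1 := ⟨n - 1, by omega⟩
  have hF_eq : F = PlaneTree.treeSeries (PlaneTree.hookWeight ρ) := by
    simp only [hF, PlaneTree.treeSeries, PlaneTree.tsum_subtype_size_eq]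
  rw [hF_eq, inv_one_sub_eq_of_eq_one_add_mul (PlaneTree.forestSeries_eq_one_add_mul _),
    PlaneTree.treeSeries, PlaneTree.forestSeries, coeff_mk, coeff_mk, Nat.add_sub_cancel,
    PlaneTree.sum_hookWeight_ofSize_succ]
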